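/- For every nonempty set E ⊆ ℝ^d and all reals r > 0 and ε > 0, vol(E_{r+ε}) ≤ vol(E_r) + (d·ε/r) · vol(E_{r+ε}). -/

import Mathlib

open MeasureTheory Metric Set

/-! The point is the scaling bound `vol(E_{ct}) ≤ c^d vol(E_t)` for `c > 1`. By inner regularity
it suffices to prove it for finitely many centres. Split the union of the large balls along the
(closed) Voronoi cells of the centres and shrink each piece towards its own centre by the factor
`c⁻¹`: the shrunk pieces lie in the small balls and, by a short inner-product computation, are
pairwise disjoint. Taking `c = 1 + ε/r`, the theorem follows from the Bernoulli-type inequality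
`(1 - dε/r)(1 + ε/r)^d ≤ 1`. -/

theorem one_sub_mul_mul_one_add_pow_le_one (n : ℕ) {x : ℝ} (hx : 0 ≤ x) :
    (1 - n * x) * (1 + x) ^ n ≤ 1 := by
  induction n with
  | zero => simp
  | succ n ih =>
    calc (1 - (n + 1 : ℕ) * x) * (1 + x) ^ (n + 1)
        = ((1 - n * x) - (n + 1) * x ^ 2) * (1 + x) ^ n := by push_cast; ring
      _ ≤ (1 - n * x) * (1 + x) ^ n := by gcongr ?_ * _; exact sub_le_self _ (by positivity)
      _ ≤ 1 := ih

section Homothety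

open AffineMap

variable {V : Type*} [NormedAddCommGroup V] [InnerProductSpace ℝ V]

/-- If the dilates of `w` by `c > 1` about `p` and about `q` lie in the Voronoi cells of `p` and of
`q` respectively, then `p = q`: Voronoi cells shrunk towards their centres are disjoint. -/
theorem eq_of_dist_homothety_le_of_dist_homothety_le {p q w : V} {c : ℝ} (hc : 1 < c)
    (hp : dist (homothety p c w) p ≤ dist (homothety p c w) q)
    (hq : dist (homothety q c w) q ≤ dist (homothety q c w) p) : p = q := by
  set a := w - p
  set u := p - q
  have hpa : homothety p c w = c • a + p := by simp [homothety_apply, a]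
  have hqa : homothety q c w = c • (a + u) + q := by
    simp only [homothety_apply, vsub_eq_sub, vadd_eq_add, a, u, sub_add_sub_cancel]
  rw [hpa, dist_eq_norm, dist_eq_norm, add_sub_cancel_right,
    show c • a + p - q = c • a + u by simp only [u]; abel] at hp
  rw [hqa, dist_eq_norm, dist_eq_norm, add_sub_cancel_right,
    show c • (a + u) + q - p = c • (a + u) - u by simp only [u]; abel] at hq
  have hp2 := mul_self_le_mul_self (norm_nonneg _) hp
  have hq2 := mul_self_le_mul_self (norm_nonneg _) hq
  simp only [← real_inner_self_eq_norm_mul_norm, inner_add_left, inner_add_right,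
    inner_sub_left, inner_sub_right, real_inner_smul_left, real_inner_smul_right,
    real_inner_comm a u] at hp2 hq2
  have hu : inner ℝ u u = 0 := by nlinarith [real_inner_self_nonneg (x := u)]
  rw [← sub_eq_zero]
  exact inner_self_eq_zero.mp hu

theorem homothety_surjective (p : V) {c : ℝ} (hc : c ≠ 0) : Function.Surjective (homothety p c) :=
  fun y => ⟨homothety p c⁻¹ y, by rw [← homothety_mul_apply, mul_inv_cancel₀ hc, homothety_one]; rfl⟩

end Homothety

section Voronoi

variable {X : Type*} [PseudoMetricSpace X]

def voronoiCell (s : Set X) (p : X) : Set X := {y | ∀ q ∈ s, dist y p ≤ dist y q}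

theorem isClosed_voronoiCell (s : Set X) (p : X) : IsClosed (voronoiCell s p) := by
  simp only [voronoiCell, ofPred_forall]
  exact isClosed_biInter fun q _ =>
    isClosed_le (continuous_id.dist continuous_const) (continuous_id.dist continuous_const)

theorem exists_mem_voronoiCell {s : Finset X} (hs : s.Nonempty) (y : X) :
    ∃ p ∈ s, y ∈ voronoiCell s p := by
  obtain ⟨p, hp, hmin⟩ := s.exists_min_image (dist y) hs
  exact ⟨p, hp, hmin⟩

theorem thickening_subset_biUnion_voronoiCell_inter_ball (s : Finset X) (δ : ℝ) :
    thickening δ (s : Set X) ⊆ ⋃ p ∈ s, voronoiCell s p ∩ ball p δ := by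
  intro y hy
  rw [thickening_eq_biUnion_ball, mem_iUnion₂] at hy
  obtain ⟨q, hq, hyq⟩ := hy
  obtain ⟨p, hp, hyp⟩ := exists_mem_voronoiCell ⟨q, hq⟩ y
  exact mem_biUnion hp ⟨hyp, (hyp q hq).trans_lt hyq⟩

end Voronoi

section AddHaar

open AffineMap Module

variable {V : Type*} [NormedAddCommGroup V] [InnerProductSpace ℝ V] [FiniteDimensional ℝ V]
  [MeasurableSpace V] [BorelSpace V] (μ : Measure V) [μ.IsAddHaarMeasure]

theorem addHaar_thickening_mul_le_of_finset (s : Finset V) {c : ℝ} (hc : 1 < c) (t : ℝ) :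
    μ (thickening (c * t) (s : Set V)) ≤
      ENNReal.ofReal (c ^ finrank ℝ V) * μ (thickening t (s : Set V)) := by
  have hc0 : 0 < c := zero_lt_one.trans hc
  set D : V → Set V := fun p => homothety p c ⁻¹' (voronoiCell s p ∩ ball p (c * t))
  have hD_meas : ∀ p, MeasurableSet (D p) := fun p =>
    ((isClosed_voronoiCell _ p).measurableSet.inter measurableSet_ball).preimage
      (homothety_continuous p c).measurable
  have hD_ball : ∀ p, D p ⊆ ball p t := fun p w hw => by
    have := hw.2
    rw [mem_ball, dist_homothety_center, Real.norm_of_nonneg hc0.le, dist_comm] at this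
    exact lt_of_mul_lt_mul_left this hc0.le
  have hD_disj : PairwiseDisjoint (s : Set V) D := fun p hp q hq hpq =>
    disjoint_left.2 fun w hwp hwq =>
      hpq (eq_of_dist_homothety_le_of_dist_homothety_le hc (hwp.1 q hq) (hwq.1 p hp))
  have hD_vol : ∀ p, μ (voronoiCell s p ∩ ball p (c * t)) =
      ENNReal.ofReal (c ^ finrank ℝ V) * μ (D p) := by
    intro p
    rw [← abs_of_pos (pow_pos hc0 _), ← Measure.addHaar_image_homothety,
      image_preimage_eq _ (homothety_surjective p hc0.ne')]
  calc μ (thickening (c * t) (s : Set V))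
      ≤ μ (⋃ p ∈ s, voronoiCell s p ∩ ball p (c * t)) :=
        measure_mono (thickening_subset_biUnion_voronoiCell_inter_ball s _)
    _ ≤ ∑ p ∈ s, μ (voronoiCell s p ∩ ball p (c * t)) := measure_biUnion_finset_le _ _
    _ = ENNReal.ofReal (c ^ finrank ℝ V) * μ (⋃ p ∈ s, D p) := by
        simp_rw [hD_vol, measure_biUnion_finset hD_disj fun p _ => hD_meas p, Finset.mul_sum]
    _ ≤ ENNReal.ofReal (c ^ finrank ℝ V) * μ (thickening t (s : Set V)) := by
        rw [thickening_eq_biUnion_ball]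
        gcongr with p hp
        exact hD_ball p

theorem addHaar_thickening_mul_le (E : Set V) {c : ℝ} (hc : 1 < c) (t : ℝ) :
    μ (thickening (c * t) E) ≤ ENNReal.ofReal (c ^ finrank ℝ V) * μ (thickening t E) := by
  rw [isOpen_thickening.measure_eq_iSup_isCompact]
  refine iSup₂_le fun K hK => iSup_le fun hKc => ?_
  rw [thickening_eq_biUnion_ball] at hK
  obtain ⟨s, hsE, hs, hKs⟩ := hKc.elim_finite_subcover_image (fun x _ => isOpen_ball) hK
  lift s to Finset V using hs
  calc μ K ≤ μ (thickening (c * t) (s : Set V)) := by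
        rw [thickening_eq_biUnion_ball]; exact measure_mono hKs
    _ ≤ ENNReal.ofReal (c ^ finrank ℝ V) * μ (thickening t (s : Set V)) :=
        addHaar_thickening_mul_le_of_finset μ s hc t
    _ ≤ ENNReal.ofReal (c ^ finrank ℝ V) * μ (thickening t E) := by
        gcongr
        exact thickening_subset_of_subset t hsE

end AddHaar

theorem volume_thickening_add_le_general (d : ℕ) (E : Set (EuclideanSpace ℝ (Fin d)))
    (r ε : ℝ) (hr : 0 < r) (hε : 0 < ε) :
    volume (Metric.thickening (r + ε) E) ≤
      volume (Metric.thickening r E) +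
        ENNReal.ofReal (d * ε / r) * volume (Metric.thickening (r + ε) E) := by
  set k := d * ε / r
  set W := volume (Metric.thickening (r + ε) E)
  have hc : 1 < 1 + ε / r := lt_add_of_pos_right 1 (div_pos hε hr)
  have hscale : W ≤ ENNReal.ofReal ((1 + ε / r) ^ d) * volume (thickening r E) := by
    have := addHaar_thickening_mul_le volume E hc r
    rwa [finrank_euclideanSpace_fin, add_mul, one_mul, div_mul_cancel₀ _ hr.ne'] at this
  have hbernoulli : (1 - k) * (1 + ε / r) ^ d ≤ 1 := by
    simpa only [k, mul_div_assoc] using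
      one_sub_mul_mul_one_add_pow_le_one d (div_nonneg hε.le hr.le)
  -- `ofReal` truncates `1 - k` at `0`, so no case split on `k ≤ 1` is needed.
  calc W ≤ (ENNReal.ofReal (1 - k) + ENNReal.ofReal k) * W := by
        refine le_mul_of_one_le_left' ?_
        simpa only [sub_add_cancel, ENNReal.ofReal_one] using
          ENNReal.ofReal_add_le (p := 1 - k) (q := k)
    _ ≤ ENNReal.ofReal ((1 - k) * (1 + ε / r) ^ d) * volume (thickening r E) +
          ENNReal.ofReal k * W := by
        rw [add_mul, ENNReal.ofReal_mul' (by positivity), mul_assoc]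
        gcongr
    _ ≤ volume (thickening r E) + ENNReal.ofReal k * W := by
        gcongr ?_ + _
        exact mul_le_of_le_one_left' (ENNReal.ofReal_le_one.2 hbernoulli)

/-- For every nonempty `E ⊆ ℝ^d` and all reals `r > 0`, `ε > 0`,
`vol(E_{r+ε}) ≤ vol(E_r) + (d·ε/r) · vol(E_{r+ε})`. -/
theorem volume_thickening_add_le (d : ℕ) (E : Set (EuclideanSpace ℝ (Fin d)))
    (hE : E.Nonempty) (r ε : ℝ) (hr : 0 < r) (hε : 0 < ε) :
    volume (Metric.thickening (r + ε) E) ≤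
      volume (Metric.thickening r E) +
        ENNReal.ofReal (d * ε / r) * volume (Metric.thickening (r + ε) E) :=
  volume_thickening_add_le_general d E r ε hr hε
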